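/- arXiv:2203.14853 — 6 statements merged into one kernel-verified Lean document; each statement's English description precedes it below -/
import Mathlib

section
/- The admissible set G ⊂ ℝ⁸ is convex: if U, Ũ ∈ G and t ∈ [0,1], then tU + (1−t)Ũ ∈ G. -/
open Finset

noncomputable section

/-- Internal energy density 𝓔(U) = E − |m|²/(2ρ) − |B|²/2 for U = (ρ,m,B,E) ∈ ℝ⁸. -/
def mhdE (U : Fin 8 → ℝ) : ℝ :=
  U 7 - (U 1 ^ 2 + U 2 ^ 2 + U 3 ^ 2) / (2 * U 0) - (U 4 ^ 2 + U 5 ^ 2 + U 6 ^ 2) / 2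

/-- The admissible state set G = {U : ρ > 0 ∧ 𝓔(U) > 0}. -/
def admG : Set (Fin 8 → ℝ) := {U | 0 < U 0 ∧ 0 < mhdE U}

/-- Velocity components v = m/ρ. -/
def vcomp (U : Fin 8 → ℝ) (i : Fin 3) : ℝ := ![U 1, U 2, U 3] i / U 0

/-- Magnetic field components. -/
def Bcomp (U : Fin 8 → ℝ) (i : Fin 3) : ℝ := ![U 4, U 5, U 6] i

/-- U · n*(v*,B*) where n*(v*,B*) = (|v*|²/2, −v*, −B*, 1). -/
def dotNstar (vs Bs : Fin 3 → ℝ) (U : Fin 8 → ℝ) : ℝ :=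
  U 0 * (vs 0 ^ 2 + vs 1 ^ 2 + vs 2 ^ 2) / 2
    - (U 1 * vs 0 + U 2 * vs 1 + U 3 * vs 2)
    - (U 4 * Bs 0 + U 5 * Bs 1 + U 6 * Bs 2) + U 7

/-- The ideal-MHD flux F_i(U;p). -/
def flux (i : Fin 3) (U : Fin 8 → ℝ) (p : ℝ) : Fin 8 → ℝ :=
  let v : Fin 3 → ℝ := fun j => ![U 1, U 2, U 3] j / U 0
  let B : Fin 3 → ℝ := ![U 4, U 5, U 6]
  let pt : ℝ := p + (B 0 ^ 2 + B 1 ^ 2 + B 2 ^ 2) / 2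
  ![U 0 * v i,
    v i * U 1 - B i * B 0 + (if i = 0 then pt else 0),
    v i * U 2 - B i * B 1 + (if i = 1 then pt else 0),
    v i * U 3 - B i * B 2 + (if i = 2 then pt else 0),
    v i * B 0 - B i * v 0,
    v i * B 1 - B i * v 1,
    v i * B 2 - B i * v 2,
    v i * (U 7 + pt) - B i * (v 0 * B 0 + v 1 * B 1 + v 2 * B 2)]

/-- 𝓒_s = p/(ρ√(2e)) with e = 𝓔(U)/ρ. -/
def Cs (U : Fin 8 → ℝ) (p : ℝ) : ℝ :=
  p / (U 0 * Real.sqrt (2 * (mhdE U / U 0)))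

/-- The speed 𝓒_i(U;p). -/
def Cfast (i : Fin 3) (U : Fin 8 → ℝ) (p : ℝ) : ℝ :=
  (1 / Real.sqrt 2) *
    Real.sqrt ((U 4 ^ 2 + U 5 ^ 2 + U 6 ^ 2) / U 0 + (Cs U p) ^ 2
      + Real.sqrt (((U 4 ^ 2 + U 5 ^ 2 + U 6 ^ 2) / U 0 + (Cs U p) ^ 2) ^ 2
          - 4 * (Bcomp U i) ^ 2 * (Cs U p) ^ 2 / U 0))

/-- The bound α_i(U,Ũ) of Lemma 2.2. -/
def alphaSpeed (i : Fin 3) (U Ut : Fin 8 → ℝ) (p pt : ℝ) : ℝ :=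
  max (max (|vcomp U i| + Cfast i U p) (|vcomp Ut i| + Cfast i Ut pt))
    (|Real.sqrt (U 0) * vcomp U i + Real.sqrt (Ut 0) * vcomp Ut i|
        / (Real.sqrt (U 0) + Real.sqrt (Ut 0))
      + max (Cfast i U p) (Cfast i Ut pt))
  + Real.sqrt ((Bcomp U 0 - Bcomp Ut 0) ^ 2 + (Bcomp U 1 - Bcomp Ut 1) ^ 2
      + (Bcomp U 2 - Bcomp Ut 2) ^ 2) / (Real.sqrt (U 0) + Real.sqrt (Ut 0))

/-- The Godunov–Powell source vector S(U) = (0, B, v, v·B). -/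
def srcS (U : Fin 8 → ℝ) : Fin 8 → ℝ :=
  ![0, U 4, U 5, U 6, U 1 / U 0, U 2 / U 0, U 3 / U 0,
    (U 1 * U 4 + U 2 * U 5 + U 3 * U 6) / U 0]

lemma quad_div_key (a b x y z w : ℝ) (ha : 0 ≤ a) (hb : 0 ≤ b)
    (hy : 0 < y) (hw : 0 < w) (hd : 0 < a * y + b * w) :
    (a * x + b * z) ^ 2 / (2 * (a * y + b * w))
      ≤ a * (x ^ 2 / (2 * y)) + b * (z ^ 2 / (2 * w)) := by
  rw [div_le_iff₀ (by positivity)]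
  have h1 : a * (x ^ 2 / (2 * y)) = a * x ^ 2 / (2 * y) := by ring
  have h2 : b * (z ^ 2 / (2 * w)) = b * z ^ 2 / (2 * w) := by ring
  have key : (a * x + b * z) ^ 2 * (y * w) ≤ (a * x ^ 2 * w + b * z ^ 2 * y) * (a * y + b * w) := by
    nlinarith [mul_nonneg (mul_nonneg ha hb) (sq_nonneg (x * w - z * y))]
  have hyw : 0 < y * w := mul_pos hy hw
  rw [h1, h2, div_add_div _ _ (by positivity) (by positivity), div_mul_eq_mul_div,
    le_div_iff₀ (by positivity)]
  nlinarith [key]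

lemma sq_key (a b x z : ℝ) (ha : 0 ≤ a) (hb : 0 ≤ b) (hab : a + b = 1) :
    (a * x + b * z) ^ 2 / 2 ≤ a * (x ^ 2 / 2) + b * (z ^ 2 / 2) := by
  nlinarith [mul_nonneg (mul_nonneg ha hb) (sq_nonneg (x - z))]

lemma convex_pos (a b x y : ℝ) (ha : 0 ≤ a) (hb : 0 ≤ b) (hab : a + b = 1)
    (hx : 0 < x) (hy : 0 < y) : 0 < a * x + b * y := by
  rcases ha.eq_or_lt with h | h
  · have hb1 : b = 1 := by linarith
    rw [← h, hb1]; simpa using hy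
  · nlinarith [mul_nonneg hb hy.le]

set_option maxHeartbeats 1000000 in
/-- The admissible set G is convex. -/
theorem admG_convex (U Ut : Fin 8 → ℝ) (hU : U ∈ admG) (hUt : Ut ∈ admG)
    (t : ℝ) (ht : t ∈ Set.Icc (0 : ℝ) 1) :
    t • U + (1 - t) • Ut ∈ admG := by
  obtain ⟨ht0, ht1⟩ := ht
  have hb : 0 ≤ 1 - t := by linarith
  obtain ⟨hρ, hE⟩ := hU
  obtain ⟨hρt, hEt⟩ := hUt
  have hd : 0 < t * U 0 + (1 - t) * Ut 0 :=
    convex_pos t (1 - t) (U 0) (Ut 0) ht0 hb (by ring) hρ hρt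
  refine ⟨by simpa using hd, ?_⟩
  have h1 := quad_div_key t (1 - t) (U 1) (U 0) (Ut 1) (Ut 0) ht0 hb hρ hρt hd
  have h2 := quad_div_key t (1 - t) (U 2) (U 0) (Ut 2) (Ut 0) ht0 hb hρ hρt hd
  have h3 := quad_div_key t (1 - t) (U 3) (U 0) (Ut 3) (Ut 0) ht0 hb hρ hρt hd
  have h4 := sq_key t (1 - t) (U 4) (Ut 4) ht0 hb (by ring)
  have h5 := sq_key t (1 - t) (U 5) (Ut 5) ht0 hb (by ring)
  have h6 := sq_key t (1 - t) (U 6) (Ut 6) ht0 hb (by ring)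
  unfold mhdE at hE hEt ⊢
  have esplitU : (U 1 ^ 2 + U 2 ^ 2 + U 3 ^ 2) / (2 * U 0)
      = U 1 ^ 2 / (2 * U 0) + U 2 ^ 2 / (2 * U 0) + U 3 ^ 2 / (2 * U 0) := by ring
  have esplitUt : (Ut 1 ^ 2 + Ut 2 ^ 2 + Ut 3 ^ 2) / (2 * Ut 0)
      = Ut 1 ^ 2 / (2 * Ut 0) + Ut 2 ^ 2 / (2 * Ut 0) + Ut 3 ^ 2 / (2 * Ut 0) := by ring
  rw [esplitU, show (U 4 ^ 2 + U 5 ^ 2 + U 6 ^ 2) / 2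
      = U 4 ^ 2 / 2 + U 5 ^ 2 / 2 + U 6 ^ 2 / 2 by ring] at hE
  rw [esplitUt, show (Ut 4 ^ 2 + Ut 5 ^ 2 + Ut 6 ^ 2) / 2
      = Ut 4 ^ 2 / 2 + Ut 5 ^ 2 / 2 + Ut 6 ^ 2 / 2 by ring] at hEt
  have hEc : 0 < t * (U 7 - (U 1 ^ 2 / (2 * U 0) + U 2 ^ 2 / (2 * U 0) + U 3 ^ 2 / (2 * U 0))
        - (U 4 ^ 2 / 2 + U 5 ^ 2 / 2 + U 6 ^ 2 / 2))
      + (1 - t) * (Ut 7 - (Ut 1 ^ 2 / (2 * Ut 0) + Ut 2 ^ 2 / (2 * Ut 0) + Ut 3 ^ 2 / (2 * Ut 0))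
        - (Ut 4 ^ 2 / 2 + Ut 5 ^ 2 / 2 + Ut 6 ^ 2 / 2)) :=
    convex_pos t (1 - t) _ _ ht0 hb (by ring) hE hEt
  simp only [Pi.add_apply, Pi.smul_apply, smul_eq_mul]
  rw [show ((t * U 1 + (1 - t) * Ut 1) ^ 2 + (t * U 2 + (1 - t) * Ut 2) ^ 2
        + (t * U 3 + (1 - t) * Ut 3) ^ 2) / (2 * (t * U 0 + (1 - t) * Ut 0))
      = (t * U 1 + (1 - t) * Ut 1) ^ 2 / (2 * (t * U 0 + (1 - t) * Ut 0))
      + (t * U 2 + (1 - t) * Ut 2) ^ 2 / (2 * (t * U 0 + (1 - t) * Ut 0))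
      + (t * U 3 + (1 - t) * Ut 3) ^ 2 / (2 * (t * U 0 + (1 - t) * Ut 0)) by ring,
    show ((t * U 4 + (1 - t) * Ut 4) ^ 2 + (t * U 5 + (1 - t) * Ut 5) ^ 2
        + (t * U 6 + (1 - t) * Ut 6) ^ 2) / 2
      = (t * U 4 + (1 - t) * Ut 4) ^ 2 / 2 + (t * U 5 + (1 - t) * Ut 5) ^ 2 / 2
      + (t * U 6 + (1 - t) * Ut 6) ^ 2 / 2 by ring]
  linarith [hEc, h1, h2, h3, h4, h5, h6]
end
end

section
/- Source-vector GQL inequality: let U ∈ G, ξ ∈ ℝ, and v*, B* ∈ ℝ³. Then −ξ S(U)·n*(v*,B*) ≥ ξ(v*·B*) − (|ξ|/√ρ)·( U·n*(v*,B*) + |B*|²/2 ). -/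
open Finset

noncomputable section

lemma aux_gql (s ξ e a0 a1 a2 b0 b1 b2 P : ℝ) (hs : 0 < s) (he : 0 < e) :
    -ξ * ((a0*b0+a1*b1+a2*b2) - P)
      ≥ ξ * P - (|ξ|/s) * (e + s^2*(a0^2+a1^2+a2^2)/2 + (b0^2+b1^2+b2^2)/2) := by
  set t := |ξ| with ht
  have h1 : 0 ≤ t + ξ := by have := neg_abs_le ξ; linarith
  have h2 : 0 ≤ t - ξ := by have := le_abs_self ξ; linarith
  have hid : t*(s^2*(a0^2+a1^2+a2^2) + (b0^2+b1^2+b2^2)) - 2*ξ*(a0*b0+a1*b1+a2*b2)*s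
      = ((t+ξ)/2)*((s*a0-b0)^2+(s*a1-b1)^2+(s*a2-b2)^2)
        + ((t-ξ)/2)*((s*a0+b0)^2+(s*a1+b1)^2+(s*a2+b2)^2) := by ring
  have k1 := mul_nonneg h1 (by positivity : (0:ℝ) ≤ (s*a0-b0)^2+(s*a1-b1)^2+(s*a2-b2)^2)
  have k2 := mul_nonneg h2 (by positivity : (0:ℝ) ≤ (s*a0+b0)^2+(s*a1+b1)^2+(s*a2+b2)^2)
  have he' : 0 ≤ t * e := mul_nonneg (abs_nonneg ξ) he.le
  have key : ξ*(a0*b0+a1*b1+a2*b2)*s ≤ t * (e + s^2*(a0^2+a1^2+a2^2)/2 + (b0^2+b1^2+b2^2)/2) := by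
    nlinarith [hid, k1, k2, he']
  have hdiv : ξ*(a0*b0+a1*b1+a2*b2) ≤ t/s * (e + s^2*(a0^2+a1^2+a2^2)/2 + (b0^2+b1^2+b2^2)/2) := by
    rw [div_mul_eq_mul_div, le_div_iff₀ hs]
    linarith
  linarith

/-- Source-vector GQL inequality. -/
theorem source_vector_gql_inequality (U : Fin 8 → ℝ) (hU : U ∈ admG)
    (ξ : ℝ) (vs Bs : Fin 3 → ℝ) :
    -ξ * dotNstar vs Bs (srcS U)
      ≥ ξ * (vs 0 * Bs 0 + vs 1 * Bs 1 + vs 2 * Bs 2)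
        - (|ξ| / Real.sqrt (U 0))
            * (dotNstar vs Bs U + (Bs 0 ^ 2 + Bs 1 ^ 2 + Bs 2 ^ 2) / 2) := by
  obtain ⟨hr, hE⟩ := hU
  have hrne : U 0 ≠ 0 := ne_of_gt hr
  have hs : 0 < Real.sqrt (U 0) := Real.sqrt_pos.mpr hr
  have hs2 : Real.sqrt (U 0) ^ 2 = U 0 := Real.sq_sqrt hr.le
  have hEq1 : dotNstar vs Bs (srcS U)
      = ((U 1 / U 0 - vs 0) * (U 4 - Bs 0) + (U 2 / U 0 - vs 1) * (U 5 - Bs 1)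
          + (U 3 / U 0 - vs 2) * (U 6 - Bs 2))
        - (vs 0 * Bs 0 + vs 1 * Bs 1 + vs 2 * Bs 2) := by
    have s0 : srcS U 0 = 0 := rfl
    have s1 : srcS U 1 = U 4 := rfl
    have s2 : srcS U 2 = U 5 := rfl
    have s3 : srcS U 3 = U 6 := rfl
    have s4 : srcS U 4 = U 1 / U 0 := rfl
    have s5 : srcS U 5 = U 2 / U 0 := rfl
    have s6 : srcS U 6 = U 3 / U 0 := rfl
    have s7 : srcS U 7 = (U 1 * U 4 + U 2 * U 5 + U 3 * U 6) / U 0 := rfl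
    simp only [dotNstar, s0, s1, s2, s3, s4, s5, s6, s7]
    field_simp
    ring
  have hEq2 : dotNstar vs Bs U + (Bs 0 ^ 2 + Bs 1 ^ 2 + Bs 2 ^ 2) / 2
      = mhdE U
        + U 0 * ((U 1 / U 0 - vs 0)^2 + (U 2 / U 0 - vs 1)^2 + (U 3 / U 0 - vs 2)^2) / 2
        + ((U 4 - Bs 0)^2 + (U 5 - Bs 1)^2 + (U 6 - Bs 2)^2) / 2 := by
    simp only [dotNstar, mhdE]
    field_simp
    ring
  rw [hEq1, hEq2]
  calc -ξ * ((U 1 / U 0 - vs 0) * (U 4 - Bs 0) + (U 2 / U 0 - vs 1) * (U 5 - Bs 1)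
          + (U 3 / U 0 - vs 2) * (U 6 - Bs 2)
        - (vs 0 * Bs 0 + vs 1 * Bs 1 + vs 2 * Bs 2))
      ≥ ξ * (vs 0 * Bs 0 + vs 1 * Bs 1 + vs 2 * Bs 2)
        - (|ξ| / Real.sqrt (U 0))
          * (mhdE U
            + Real.sqrt (U 0) ^ 2
                * ((U 1 / U 0 - vs 0)^2 + (U 2 / U 0 - vs 1)^2 + (U 3 / U 0 - vs 2)^2) / 2
            + ((U 4 - Bs 0)^2 + (U 5 - Bs 1)^2 + (U 6 - Bs 2)^2) / 2) :=
        aux_gql (Real.sqrt (U 0)) ξ (mhdE U) _ _ _ _ _ _ _ hs hE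
    _ = ξ * (vs 0 * Bs 0 + vs 1 * Bs 1 + vs 2 * Bs 2)
        - (|ξ| / Real.sqrt (U 0))
          * (mhdE U
            + U 0 * ((U 1 / U 0 - vs 0)^2 + (U 2 / U 0 - vs 1)^2 + (U 3 / U 0 - vs 2)^2) / 2
            + ((U 4 - Bs 0)^2 + (U 5 - Bs 1)^2 + (U 6 - Bs 2)^2) / 2) := by rw [hs2]
end
end

section
/- Jump bound (Proposition 5.2): let U, Ũ ∈ G with associated pressures p, p̃ > 0, and let ℓ ∈ {1,2,3}. Then |B̃_ℓ − B_ℓ| / ( 2√((ρ + ρ̃)/2) ) ≤ (1/2)·α_ℓ(U,Ũ). -/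
open Finset

noncomputable section

/-!
Each of `|B_ℓ|`, `|B̃_ℓ|` is at most `√ρ` times the corresponding fast speed `𝓒_ℓ`, so the jump
`|B̃_ℓ - B_ℓ|` is at most `(√ρ + √ρ̃) · max {𝓒_ℓ(U;p), 𝓒_ℓ(Ũ;p̃)}`; it is also at most `|B̃ - B|`.
Since `√ρ + √ρ̃ ≤ 2√((ρ + ρ̃)/2)` by concavity of the square root, the left-hand side is bounded
both by that maximum, which is at most the first summand of `α_ℓ`, and by `|B̃ - B|/(√ρ + √ρ̃)`,
its second summand.
-/

/- With `s = |B|²/ρ`, `q = B_ℓ²/ρ` and `c = 𝓒_s` the right-hand side is `𝓒_ℓ(U;p)`, so this says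
that the fast speed dominates the Alfvén speed `|B_ℓ|/√ρ`. -/
lemma sqrt_le_fastSpeed {q s : ℝ} (hq : 0 ≤ q) (hqs : q ≤ s) (c : ℝ) :
    √q ≤ (1 / √2) * √(s + c ^ 2 + √((s + c ^ 2) ^ 2 - 4 * q * c ^ 2)) := by
  -- the discriminant exceeds `(2q - s - c²)²` by `4q(s - q) ≥ 0`
  have hdisc : 2 * q - (s + c ^ 2) ≤ √((s + c ^ 2) ^ 2 - 4 * q * c ^ 2) :=
    Real.le_sqrt_of_sq_le (by nlinarith [mul_nonneg hq (sub_nonneg.2 hqs)])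
  calc √q = (1 / √2) * √(2 * q) := by
        rw [Real.sqrt_mul zero_le_two]; field_simp
    _ ≤ _ := by gcongr; linarith

lemma Bcomp_sq_le (U : Fin 8 → ℝ) (ℓ : Fin 3) :
    Bcomp U ℓ ^ 2 ≤ U 4 ^ 2 + U 5 ^ 2 + U 6 ^ 2 := by
  fin_cases ℓ <;>
    simp only [Bcomp, Fin.zero_eta, Fin.mk_one, Fin.reduceFinMk, Matrix.cons_val_zero,
      Matrix.cons_val_one, Matrix.cons_val] <;>
    nlinarith [sq_nonneg (U 4), sq_nonneg (U 5), sq_nonneg (U 6)]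

lemma abs_Bcomp_le_sqrt_mul_Cfast (ℓ : Fin 3) {U : Fin 8 → ℝ} (hρ : 0 < U 0) (p : ℝ) :
    |Bcomp U ℓ| ≤ √(U 0) * Cfast ℓ U p := by
  have hq : Bcomp U ℓ ^ 2 / U 0 ≤ (U 4 ^ 2 + U 5 ^ 2 + U 6 ^ 2) / U 0 := by
    gcongr; exact Bcomp_sq_le U ℓ
  have h := sqrt_le_fastSpeed (by positivity) hq (Cs U p)
  rw [Real.sqrt_div' _ hρ.le, Real.sqrt_sq_eq_abs, div_le_iff₀' (Real.sqrt_pos.2 hρ)] at h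
  refine h.trans_eq ?_
  rw [Cfast]
  ring_nf

lemma abs_Bcomp_sub_le_sqrt_sum_sq (U Ut : Fin 8 → ℝ) (ℓ : Fin 3) :
    |Bcomp Ut ℓ - Bcomp U ℓ| ≤ √((Bcomp U 0 - Bcomp Ut 0) ^ 2 + (Bcomp U 1 - Bcomp Ut 1) ^ 2
      + (Bcomp U 2 - Bcomp Ut 2) ^ 2) := by
  rw [← Real.sqrt_sq_eq_abs]
  gcongr
  fin_cases ℓ <;> simp only [Fin.zero_eta, Fin.mk_one, Fin.reduceFinMk] <;>
    nlinarith [sq_nonneg (Bcomp U 0 - Bcomp Ut 0), sq_nonneg (Bcomp U 1 - Bcomp Ut 1),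
      sq_nonneg (Bcomp U 2 - Bcomp Ut 2)]

lemma sqrt_add_sqrt_le {x y : ℝ} (hx : 0 ≤ x) (hy : 0 ≤ y) :
    √x + √y ≤ 2 * √((x + y) / 2) := by
  have h := add_sq_le (a := √x) (b := √y)
  rw [Real.sq_sqrt hx, Real.sq_sqrt hy] at h
  have : 2 * √((x + y) / 2) = √(2 * (x + y)) := by
    rw [show 2 * (x + y) = 2 ^ 2 * ((x + y) / 2) by ring, Real.sqrt_mul (by positivity),
      Real.sqrt_sq zero_le_two]
  rw [this]
  exact Real.le_sqrt_of_sq_le h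

lemma abs_Bcomp_sub_le_mul_max_Cfast (ℓ : Fin 3) {U Ut : Fin 8 → ℝ} (hρ : 0 < U 0)
    (hρt : 0 < Ut 0) (p pt : ℝ) :
    |Bcomp Ut ℓ - Bcomp U ℓ| ≤ (√(U 0) + √(Ut 0)) * max (Cfast ℓ U p) (Cfast ℓ Ut pt) :=
  calc |Bcomp Ut ℓ - Bcomp U ℓ| ≤ |Bcomp U ℓ| + |Bcomp Ut ℓ| := by
        rw [add_comm]; exact abs_sub _ _
    _ ≤ √(U 0) * Cfast ℓ U p + √(Ut 0) * Cfast ℓ Ut pt :=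
        add_le_add (abs_Bcomp_le_sqrt_mul_Cfast ℓ hρ p) (abs_Bcomp_le_sqrt_mul_Cfast ℓ hρt pt)
    _ ≤ _ := by rw [add_mul]; gcongr <;> simp

theorem jump_bound_general (U Ut : Fin 8 → ℝ) (p pt : ℝ)
    (hU : U ∈ admG) (hUt : Ut ∈ admG) (ℓ : Fin 3) :
    |Bcomp Ut ℓ - Bcomp U ℓ| / (2 * Real.sqrt ((U 0 + Ut 0) / 2))
      ≤ (1 / 2) * alphaSpeed ℓ U Ut p pt := by
  obtain ⟨hρ, -⟩ := hU
  obtain ⟨hρt, -⟩ := hUt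
  set D := √(U 0) + √(Ut 0)
  have hD : 0 < D := by positivity
  have hmean : |Bcomp Ut ℓ - Bcomp U ℓ| / (2 * √((U 0 + Ut 0) / 2))
      ≤ |Bcomp Ut ℓ - Bcomp U ℓ| / D :=
    div_le_div_of_nonneg_left (abs_nonneg _) hD (sqrt_add_sqrt_le hρ.le hρt.le)
  have hspeed : |Bcomp Ut ℓ - Bcomp U ℓ| / D ≤ max (Cfast ℓ U p) (Cfast ℓ Ut pt) :=
    (div_le_iff₀' hD).2 (abs_Bcomp_sub_le_mul_max_Cfast ℓ hρ hρt p pt)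
  have hfield := div_le_div_of_nonneg_right (abs_Bcomp_sub_le_sqrt_sum_sq U Ut ℓ) hD.le
  have hroe : max (Cfast ℓ U p) (Cfast ℓ Ut pt) ≤
      max (max (|vcomp U ℓ| + Cfast ℓ U p) (|vcomp Ut ℓ| + Cfast ℓ Ut pt))
        (|√(U 0) * vcomp U ℓ + √(Ut 0) * vcomp Ut ℓ| / D + max (Cfast ℓ U p) (Cfast ℓ Ut pt)) :=
    le_max_of_le_right (le_add_of_nonneg_left (by positivity))
  rw [alphaSpeed]
  linarith

/-- Jump bound (Proposition 5.2). -/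
theorem jump_bound (U Ut : Fin 8 → ℝ) (p pt : ℝ)
    (hU : U ∈ admG) (hUt : Ut ∈ admG) (hp : 0 < p) (hpt : 0 < pt) (ℓ : Fin 3) :
    |Bcomp Ut ℓ - Bcomp U ℓ| / (2 * Real.sqrt ((U 0 + Ut 0) / 2))
      ≤ (1 / 2) * alphaSpeed ℓ U Ut p pt :=
  jump_bound_general U Ut p pt hU hUt ℓ
end
end

section
/- Necessity of the discrete divergence-free condition (Theorem 4.2, explicit counterexample): let γ > 1, θ ∈ (0,1], C > 0, and δ = min{C/8, 1}. Then for the counterexample data: the states U₀, U₁, U₂ all belong to G with 𝓔(U₀) = 𝓔(U₁) = 𝓔(U₂) = p/(γ−1), so each has ideal-EOS pressure p; and for every ε ∈ (0,δ) there exists p ∈ (0,1/γ) such that 𝓔(U(p,ε)) < 0, i.e., U(p,ε) ∉ G. In particular, the 2D standard CDG update can leave G even when all point values and cell averages are admissible, because the discrete divergence-free condition is violated. -/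
open Finset

noncomputable section

/-- The state U₀ of the counterexample. -/
def cexU0 (γ δ ε p : ℝ) : Fin 8 → ℝ :=
  ![1, 1 + δ * ε, 0, 0, 1 + ε / 2, 0, 0,
    (1 + δ * ε) ^ 2 / 2 + (2 + ε) ^ 2 / 8 + p / (γ - 1)]

/-- The state U₁ of the counterexample. -/
def cexU1 (γ p : ℝ) : Fin 8 → ℝ :=
  ![1, 1, 0, 0, 1, 0, 0, 1 + p / (γ - 1)]

/-- The state U₂ of the counterexample. -/
def cexU2 (γ ε p : ℝ) : Fin 8 → ℝ :=
  ![1, 1, 0, 0, 1 + ε, 0, 0, (1 + (1 + ε) ^ 2) / 2 + p / (γ - 1)]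

/-- The state U(p,ε) of the counterexample, with ã₁ = 5 and ã₂ = √(γp+4) + 1. -/
def cexU (γ θ C ε p : ℝ) : Fin 8 → ℝ :=
  (1 - θ) • cexU0 γ (min (C / 8) 1) ε p + (θ / 2) • (cexU1 γ p + cexU2 γ ε p)
    + (θ * C / (5 + (Real.sqrt (γ * p + 4) + 1))) •
        (flux 0 (cexU1 γ p) p - flux 0 (cexU2 γ ε p) p)

/-!
All states involved have unit density and are aligned with the first axis, so
`𝓔 = E − m²/2 − B²/2` on them. The flux difference `F₁(U₁) − F₁(U₂)` vanishes except in the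
first momentum component, where it is the jump `ε(1 + ε/2)` of the magnetic pressure caused by
the discrete divergence `B₁(U₂) − B₁(U₁) = ε`. Adding `c` times it costs about `cε` of internal
energy, whereas the convex combination only has `θε²/8 + p/(γ − 1)` to spare; since
`ã₁ + ã₂ < 9` and `C ≥ 8δ > 8ε`, we get `c > 8θε/9`, and a small pressure makes `𝓔` negative.
-/

def axialState (m b E : ℝ) : Fin 8 → ℝ := ![1, m, 0, 0, b, 0, 0, E]

lemma mhdE_axialState (m b E : ℝ) : mhdE (axialState m b E) = E - m ^ 2 / 2 - b ^ 2 / 2 := by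
  simp [mhdE, axialState]

lemma flux_zero_axialState_one (b E p : ℝ) :
    flux 0 (axialState 1 b E) p = ![1, 1 - b ^ 2 / 2 + p, 0, 0, 0, 0, 0, E + p - b ^ 2 / 2] := by
  ext i
  fin_cases i <;> simp [flux, axialState] <;> ring

section Counterexample

variable (γ θ δ ε p c : ℝ)

lemma cexU0_eq : cexU0 γ δ ε p =
    axialState (1 + δ * ε) (1 + ε / 2) ((1 + δ * ε) ^ 2 / 2 + (2 + ε) ^ 2 / 8 + p / (γ - 1)) :=
  rfl

lemma cexU1_eq : cexU1 γ p = axialState 1 1 (1 + p / (γ - 1)) := rfl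

lemma cexU2_eq : cexU2 γ ε p = axialState 1 (1 + ε) ((1 + (1 + ε) ^ 2) / 2 + p / (γ - 1)) := rfl

lemma mhdE_cexU0 : mhdE (cexU0 γ δ ε p) = p / (γ - 1) := by
  rw [cexU0_eq, mhdE_axialState]; ring

lemma mhdE_cexU1 : mhdE (cexU1 γ p) = p / (γ - 1) := by
  rw [cexU1_eq, mhdE_axialState]; ring

lemma mhdE_cexU2 : mhdE (cexU2 γ ε p) = p / (γ - 1) := by
  rw [cexU2_eq, mhdE_axialState]; ring

lemma cexCombination_eq :
    (1 - θ) • cexU0 γ δ ε p + (θ / 2) • (cexU1 γ p + cexU2 γ ε p)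
        + c • (flux 0 (cexU1 γ p) p - flux 0 (cexU2 γ ε p) p) =
      axialState (1 + ((1 - θ) * δ + c * (1 + ε / 2)) * ε) (1 + ε / 2)
        ((1 - θ) * ((1 + δ * ε) ^ 2 / 2 + (2 + ε) ^ 2 / 8)
          + θ / 2 * (1 + (1 + (1 + ε) ^ 2) / 2) + p / (γ - 1)) := by
  rw [cexU0_eq, cexU1_eq, cexU2_eq, flux_zero_axialState_one, flux_zero_axialState_one]
  ext i
  fin_cases i <;> simp [axialState] <;> ring

lemma mhdE_cexCombination :
    mhdE ((1 - θ) • cexU0 γ δ ε p + (θ / 2) • (cexU1 γ p + cexU2 γ ε p)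
        + c • (flux 0 (cexU1 γ p) p - flux 0 (cexU2 γ ε p) p)) =
      p / (γ - 1) + θ * ε ^ 2 / 8 - c * ε * (1 + ε / 2)
        + ε ^ 2 * ((1 - θ) * δ ^ 2 - ((1 - θ) * δ + c * (1 + ε / 2)) ^ 2) / 2 := by
  rw [cexCombination_eq, mhdE_axialState]; ring

end Counterexample

lemma cex_energy_neg {θ δ ε c q : ℝ} (hθ0 : 0 < θ) (hθ1 : θ ≤ 1) (hε0 : 0 < ε) (hεδ : ε < δ)
    (hc : 8 * θ * δ / 9 ≤ c) (hq : q ≤ θ * ε ^ 2 / 2) :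
    q + θ * ε ^ 2 / 8 - c * ε * (1 + ε / 2)
      + ε ^ 2 * ((1 - θ) * δ ^ 2 - ((1 - θ) * δ + c * (1 + ε / 2)) ^ 2) / 2 < 0 := by
  have hδ0 : 0 < δ := hε0.trans hεδ
  have hc0 : 0 ≤ c := le_trans (by positivity) hc
  have hc_le : c ≤ c * (1 + ε / 2) := by nlinarith [mul_nonneg hc0 hε0.le]
  have hmom : δ * (1 - θ / 9) ≤ (1 - θ) * δ + c * (1 + ε / 2) := by linarith
  have hmom_sq : (1 - θ) * δ ^ 2 ≤ ((1 - θ) * δ + c * (1 + ε / 2)) ^ 2 :=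
    calc (1 - θ) * δ ^ 2 ≤ (δ * (1 - θ / 9)) ^ 2 := by
          nlinarith [mul_nonneg (sq_nonneg δ) hθ0.le, sq_nonneg (δ * θ)]
      _ ≤ _ := pow_le_pow_left₀ (by nlinarith) hmom 2
  have hcε : 8 * θ * ε ^ 2 / 9 < c * ε * (1 + ε / 2) :=
    calc 8 * θ * ε ^ 2 / 9 < 8 * θ * δ / 9 * ε := by
          nlinarith [mul_pos (mul_pos hθ0 hε0) (sub_pos.2 hεδ)]
      _ ≤ c * ε := by gcongr
      _ ≤ c * ε * (1 + ε / 2) := by nlinarith [mul_nonneg hc0 hε0.le]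
  nlinarith [mul_nonneg (sq_nonneg ε) (sub_nonneg.2 hmom_sq)]

lemma exists_mem_Ioo_one_div_div_sub_one_le {γ η : ℝ} (hγ : 1 < γ) (hη : 0 < η) :
    ∃ p ∈ Set.Ioo (0 : ℝ) (1 / γ), p / (γ - 1) ≤ η := by
  have hγ1 : 0 < γ - 1 := sub_pos.2 hγ
  refine ⟨min (1 / (2 * γ)) ((γ - 1) * η), ⟨by positivity, ?_⟩, ?_⟩
  · calc min (1 / (2 * γ)) ((γ - 1) * η) ≤ 1 / (2 * γ) := min_le_left _ _
      _ < 1 / γ := one_div_lt_one_div_of_lt (by positivity) (by linarith)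
  · rw [div_le_iff₀ hγ1, mul_comm η]
    exact min_le_right _ _

lemma wave_speed_sum_lt_nine {γ p : ℝ} (hγp : γ * p < 5) :
    5 + (Real.sqrt (γ * p + 4) + 1) < 9 := by
  have : Real.sqrt (γ * p + 4) < 3 := (Real.sqrt_lt' (by norm_num)).2 (by linarith)
  linarith

theorem counterexample_not_pp_general (γ θ C : ℝ) (hγ : 1 < γ)
    (hθ : θ ∈ Set.Ioc (0 : ℝ) 1) :
    (∀ ε ∈ Set.Ioo (0 : ℝ) (min (C / 8) 1), ∀ p ∈ Set.Ioo (0 : ℝ) (1 / γ),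
      cexU0 γ (min (C / 8) 1) ε p ∈ admG ∧ cexU1 γ p ∈ admG ∧ cexU2 γ ε p ∈ admG
      ∧ mhdE (cexU0 γ (min (C / 8) 1) ε p) = p / (γ - 1)
      ∧ mhdE (cexU1 γ p) = p / (γ - 1)
      ∧ mhdE (cexU2 γ ε p) = p / (γ - 1))
    ∧ (∀ ε ∈ Set.Ioo (0 : ℝ) (min (C / 8) 1),
        ∃ p ∈ Set.Ioo (0 : ℝ) (1 / γ), mhdE (cexU γ θ C ε p) < 0) := by
  obtain ⟨hθ0, hθ1⟩ := hθ
  refine ⟨fun ε _ p ⟨hp0, _⟩ => ?_, fun ε ⟨hε0, hεδ⟩ => ?_⟩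
  · have hq : 0 < p / (γ - 1) := div_pos hp0 (sub_pos.2 hγ)
    refine ⟨⟨one_pos, ?_⟩, ⟨one_pos, ?_⟩, ⟨one_pos, ?_⟩,
      mhdE_cexU0 .., mhdE_cexU1 .., mhdE_cexU2 ..⟩ <;>
    simpa only [mhdE_cexU0, mhdE_cexU1, mhdE_cexU2]
  · obtain ⟨p, ⟨hp0, hp1⟩, hq⟩ :=
      exists_mem_Ioo_one_div_div_sub_one_le hγ (by positivity : 0 < θ * ε ^ 2 / 2)
    have hγp : γ * p < 5 := by
      have := (lt_div_iff₀' (by linarith : 0 < γ)).1 hp1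
      linarith
    have hden := wave_speed_sum_lt_nine hγp
    have hc : 8 * θ * min (C / 8) 1 / 9 ≤ θ * C / (5 + (Real.sqrt (γ * p + 4) + 1)) := by
      have hC : 0 < C := by linarith [min_le_left (C / 8) 1]
      calc 8 * θ * min (C / 8) 1 / 9 ≤ θ * C / 9 := by
            linarith [mul_le_mul_of_nonneg_left (min_le_left (C / 8) 1) hθ0.le]
        _ ≤ _ := div_le_div_of_nonneg_left (by positivity) (by positivity) hden.le
    refine ⟨p, ⟨hp0, hp1⟩, ?_⟩
    rw [cexU, mhdE_cexCombination]
    exact cex_energy_neg hθ0 hθ1 hε0 hεδ hc hq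

/-- Necessity of the discrete divergence-free condition
(Theorem 4.2, explicit counterexample). -/
theorem counterexample_not_pp (γ θ C : ℝ) (hγ : 1 < γ)
    (hθ : θ ∈ Set.Ioc (0 : ℝ) 1) (hC : 0 < C) :
    (∀ ε ∈ Set.Ioo (0 : ℝ) (min (C / 8) 1), ∀ p ∈ Set.Ioo (0 : ℝ) (1 / γ),
      cexU0 γ (min (C / 8) 1) ε p ∈ admG ∧ cexU1 γ p ∈ admG ∧ cexU2 γ ε p ∈ admG
      ∧ mhdE (cexU0 γ (min (C / 8) 1) ε p) = p / (γ - 1)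
      ∧ mhdE (cexU1 γ p) = p / (γ - 1)
      ∧ mhdE (cexU2 γ ε p) = p / (γ - 1))
    ∧ (∀ ε ∈ Set.Ioo (0 : ℝ) (min (C / 8) 1),
        ∃ p ∈ Set.Ioo (0 : ℝ) (1 / γ), mhdE (cexU γ θ C ε p) < 0) :=
  counterexample_not_pp_general γ θ C hγ hθ
end
end

section
/- Limit formula in the counterexample (key computation in the proof of Theorem 4.2): let γ > 1, θ ∈ (0,1], C > 0, δ̂ = C/8, δ = min{C/8, 1}, δ̃ = δ̂ − δ, and ε ∈ (0,δ). Then, in the counterexample data, the limit as p → 0⁺ of 𝓔(U(p,ε)) exists and equals −(θε/8)·[ (8δ̂ − ε) + θε(2δ̃ + δ̂ε)² + 4ε( δ̂ + δδ̃ + δδ̂(1+ε) ) ], and this value is strictly negative. -/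
open Finset

noncomputable section

/-! The flux difference `F₁(U₁;p) − F₁(U₂;p)` only has a momentum component, `ε(2+ε)/2`, so
`U(p,ε)` has unit density, `B = (1 + ε/2, 0, 0)`, and momentum and energy that depend continuously
on `p`. Hence `𝓔(U(p,ε))` is continuous in `p`, and its limit is its value at `p = 0`, where
`ã₁ + ã₂ = 8`. -/

lemma flux_cexU1_sub_flux_cexU2 (γ ε p : ℝ) :
    flux 0 (cexU1 γ p) p - flux 0 (cexU2 γ ε p) p = Pi.single 1 (ε * (2 + ε) / 2) := by
  ext i
  fin_cases i <;> simp [flux, cexU1, cexU2] <;> ring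

lemma cexU_eq (γ θ C ε p : ℝ) :
    cexU γ θ C ε p =
      ![1,
        (1 - θ) * (1 + min (C / 8) 1 * ε) + θ
          + θ * C / (5 + (√(γ * p + 4) + 1)) * (ε * (2 + ε) / 2),
        0, 0, 1 + ε / 2, 0, 0,
        (1 - θ) * ((1 + min (C / 8) 1 * ε) ^ 2 / 2 + (2 + ε) ^ 2 / 8)
          + θ / 2 * (1 + (1 + (1 + ε) ^ 2) / 2) + p / (γ - 1)] := by
  rw [cexU, flux_cexU1_sub_flux_cexU2]
  ext i
  fin_cases i <;> simp [cexU0, cexU1, cexU2] <;> ring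

lemma mhdE_of_unit_density (m b e : ℝ) :
    mhdE ![1, m, 0, 0, b, 0, 0, e] = e - m ^ 2 / 2 - b ^ 2 / 2 := by
  simp [mhdE]

lemma continuous_mhdE_cexU (γ θ C ε : ℝ) : Continuous fun p => mhdE (cexU γ θ C ε p) := by
  simp only [cexU_eq, mhdE_of_unit_density]
  have hden : ∀ p : ℝ, 5 + (√(γ * p + 4) + 1) ≠ 0 := fun p => by positivity
  have : Continuous fun p : ℝ => θ * C / (5 + (√(γ * p + 4) + 1)) :=
    continuous_const.div (by fun_prop) hden
  fun_prop

lemma mhdE_cexU_zero (γ θ C ε : ℝ) :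
    mhdE (cexU γ θ C ε 0) =
      -(θ * ε / 8) *
          ((8 * (C / 8) - ε)
            + θ * ε * (2 * (C / 8 - min (C / 8) 1) + (C / 8) * ε) ^ 2
            + 4 * ε * (C / 8 + min (C / 8) 1 * (C / 8 - min (C / 8) 1)
                + min (C / 8) 1 * (C / 8) * (1 + ε))) := by
  have hsqrt : √(γ * 0 + 4) = 2 := by
    rw [show γ * 0 + 4 = (2 : ℝ) ^ 2 by ring, Real.sqrt_sq zero_le_two]
  rw [cexU_eq, mhdE_of_unit_density, hsqrt]
  ring

lemma limit_value_neg {θ ε δ δh : ℝ} (hθ : 0 < θ) (hε : 0 < ε) (hεδh : ε < δh) (hδ : 0 ≤ δ)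
    (hδδh : δ ≤ δh) :
    -(θ * ε / 8) * ((8 * δh - ε) + θ * ε * (2 * (δh - δ) + δh * ε) ^ 2
      + 4 * ε * (δh + δ * (δh - δ) + δ * δh * (1 + ε))) < 0 := by
  have hδh : 0 < δh := hε.trans hεδh
  have : 0 < 8 * δh - ε := by linarith
  have : 0 ≤ δ * (δh - δ) := mul_nonneg hδ (by linarith)
  have : 0 < (8 * δh - ε) + θ * ε * (2 * (δh - δ) + δh * ε) ^ 2
      + 4 * ε * (δh + δ * (δh - δ) + δ * δh * (1 + ε)) := by positivity
  have : 0 < θ * ε / 8 := by positivity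
  nlinarith

theorem counterexample_limit_general (γ θ C ε : ℝ)
    (hθ : θ ∈ Set.Ioc (0 : ℝ) 1)
    (hε : ε ∈ Set.Ioo (0 : ℝ) (min (C / 8) 1)) :
    Filter.Tendsto (fun p => mhdE (cexU γ θ C ε p))
        (nhdsWithin 0 (Set.Ioi 0))
        (nhds (-(θ * ε / 8) *
          ((8 * (C / 8) - ε)
            + θ * ε * (2 * (C / 8 - min (C / 8) 1) + (C / 8) * ε) ^ 2
            + 4 * ε * (C / 8 + min (C / 8) 1 * (C / 8 - min (C / 8) 1)
                + min (C / 8) 1 * (C / 8) * (1 + ε)))))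
    ∧ -(θ * ε / 8) *
          ((8 * (C / 8) - ε)
            + θ * ε * (2 * (C / 8 - min (C / 8) 1) + (C / 8) * ε) ^ 2
            + 4 * ε * (C / 8 + min (C / 8) 1 * (C / 8 - min (C / 8) 1)
                + min (C / 8) 1 * (C / 8) * (1 + ε))) < 0 := by
  obtain ⟨hε0, hεδ⟩ := hε
  have hδ : 0 < min (C / 8) 1 := hε0.trans hεδ
  refine ⟨?_, limit_value_neg hθ.1 hε0 (hεδ.trans_le (min_le_left _ _)) hδ.le (min_le_left _ _)⟩
  rw [← mhdE_cexU_zero γ]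
  exact ((continuous_mhdE_cexU γ θ C ε).tendsto 0).mono_left nhdsWithin_le_nhds

/-- Limit formula in the counterexample (key computation in
the proof of Theorem 4.2): as p → 0⁺, 𝓔(U(p,ε)) tends to the stated
strictly negative value. -/
theorem counterexample_limit (γ θ C ε : ℝ) (hγ : 1 < γ)
    (hθ : θ ∈ Set.Ioc (0 : ℝ) 1) (hC : 0 < C)
    (hε : ε ∈ Set.Ioo (0 : ℝ) (min (C / 8) 1)) :
    Filter.Tendsto (fun p => mhdE (cexU γ θ C ε p))
        (nhdsWithin 0 (Set.Ioi 0))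
        (nhds (-(θ * ε / 8) *
          ((8 * (C / 8) - ε)
            + θ * ε * (2 * (C / 8 - min (C / 8) 1) + (C / 8) * ε) ^ 2
            + 4 * ε * (C / 8 + min (C / 8) 1 * (C / 8 - min (C / 8) 1)
                + min (C / 8) 1 * (C / 8) * (1 + ε)))))
    ∧ -(θ * ε / 8) *
          ((8 * (C / 8) - ε)
            + θ * ε * (2 * (C / 8 - min (C / 8) 1) + (C / 8) * ε) ^ 2
            + 4 * ε * (C / 8 + min (C / 8) 1 * (C / 8 - min (C / 8) 1)
                + min (C / 8) 1 * (C / 8) * (1 + ε))) < 0 :=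
  counterexample_limit_general γ θ C ε hθ hε
end
end

section
/- Lower bound for the discretized Godunov–Powell source term (estimate in the proof of Theorem 5.1): let N ≥ 1 and ω_μ > 0 (μ = 1,…,N) with Σ_μ ω_μ = 1, and let Δx, Δy, Δt > 0. For each σ ∈ {−1,+1} and μ ∈ {1,…,N}, let V_{σμ}, W_{σμ} ∈ G and ξ_{σμ}, η_{σμ} ∈ ℝ, and let β₁, β₂ ∈ ℝ satisfy β₁ ≥ |ξ_{σμ}|/(2√(ρ(V_{σμ}))) and β₂ ≥ |η_{σμ}|/(2√(ρ(W_{σμ}))) for all σ, μ. Then for all v*, B* ∈ ℝ³: Δt·Σ_{σ,μ}(ω_μ/2)( −(ξ_{σμ}/Δx)·S(V_{σμ}) − (η_{σμ}/Δy)·S(W_{σμ}) )·n*(v*,B*) ≥ Δt(v*·B*)·Σ_{σ,μ}(ω_μ/2)( ξ_{σμ}/Δx + η_{σμ}/Δy ) − (2β₁Δt/Δx)·Σ_{σ,μ}(ω_μ/2)( V_{σμ}·n*(v*,B*) + |B*|²/2 ) − (2β₂Δt/Δy)·Σ_{σ,μ}(ω_μ/2)( W_{σμ}·n*(v*,B*)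 + |B*|²/2 ). -/
open Finset

noncomputable section

/-!
Write `a = v − v*` and `b = B − B*`. Then `S(U)·n* = a·b − v*·B*` and
`U·n* + |B*|²/2 = 𝓔(U) + (ρ|a|² + |b|²)/2`, so by AM–GM `√ρ |a·b| ≤ U·n* + |B*|²/2` on `G`.
Since `|ξ| ≤ 2β√ρ`, every summand obeys the estimate, and the weights `Δt ω_μ / 2` are
nonnegative, so summing gives the bound.
-/

def dotNstarₗ (vs Bs : Fin 3 → ℝ) : (Fin 8 → ℝ) →ₗ[ℝ] ℝ where
  toFun := dotNstar vs Bs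
  map_add' U W := by simp only [dotNstar, Pi.add_apply]; ring
  map_smul' c U := by simp only [dotNstar, Pi.smul_apply, smul_eq_mul, RingHom.id_apply]; ring

@[simp]
lemma dotNstarₗ_apply (vs Bs : Fin 3 → ℝ) (U : Fin 8 → ℝ) : dotNstarₗ vs Bs U = dotNstar vs Bs U :=
  rfl

lemma two_mul_abs_sum_mul_le {ι : Type*} (s : Finset ι) (a b : ι → ℝ) :
    2 * |∑ i ∈ s, a i * b i| ≤ ∑ i ∈ s, (a i ^ 2 + b i ^ 2) :=
  calc 2 * |∑ i ∈ s, a i * b i| ≤ ∑ i ∈ s, 2 * (|a i| * |b i|) := by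
        rw [← mul_sum]
        gcongr
        simpa only [abs_mul] using abs_sum_le_sum_abs (fun i => a i * b i) s
    _ ≤ ∑ i ∈ s, (a i ^ 2 + b i ^ 2) := by
        gcongr with i
        simpa only [sq_abs, ← mul_assoc] using two_mul_le_add_sq |a i| |b i|

section

variable (vs Bs : Fin 3 → ℝ) {U : Fin 8 → ℝ}

lemma dotNstar_srcS (hρ : U 0 ≠ 0) :
    dotNstar vs Bs (srcS U)
      = ∑ i, (vcomp U i - vs i) * (Bcomp U i - Bs i) - ∑ i, vs i * Bs i := by
  simp only [dotNstar, srcS, vcomp, Bcomp, Fin.sum_univ_three, Matrix.cons_val_zero,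
    Matrix.cons_val_one, Matrix.cons_val]
  field_simp
  ring

lemma dotNstar_add_half_sq (hρ : U 0 ≠ 0) :
    dotNstar vs Bs U + (∑ i, Bs i ^ 2) / 2
      = mhdE U + (U 0 * ∑ i, (vcomp U i - vs i) ^ 2 + ∑ i, (Bcomp U i - Bs i) ^ 2) / 2 := by
  simp only [dotNstar, mhdE, vcomp, Bcomp, Fin.sum_univ_three, Matrix.cons_val_zero,
    Matrix.cons_val_one, Matrix.cons_val]
  field_simp
  ring

lemma sqrt_mul_abs_le_dotNstar_add_half_sq (hU : U ∈ admG) :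
    √(U 0) * |∑ i, (vcomp U i - vs i) * (Bcomp U i - Bs i)|
      ≤ dotNstar vs Bs U + (∑ i, Bs i ^ 2) / 2 := by
  have hsq := two_mul_abs_sum_mul_le univ (fun i => √(U 0) * (vcomp U i - vs i))
    (fun i => Bcomp U i - Bs i)
  simp only [mul_pow, Real.sq_sqrt hU.1.le, sum_add_distrib, ← mul_sum, mul_assoc] at hsq
  rw [abs_mul, abs_of_nonneg (Real.sqrt_nonneg _)] at hsq
  rw [dotNstar_add_half_sq vs Bs hU.1.ne']
  linarith [hU.2]

lemma le_neg_mul_dotNstar_srcS (hU : U ∈ admG) {ξ β : ℝ} (hβ : |ξ| / (2 * √(U 0)) ≤ β) :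
    ξ * ∑ i, vs i * Bs i - 2 * β * (dotNstar vs Bs U + (∑ i, Bs i ^ 2) / 2)
      ≤ -ξ * dotNstar vs Bs (srcS U) := by
  set P := ∑ i, (vcomp U i - vs i) * (Bcomp U i - Bs i)
  have hξ : |ξ| ≤ 2 * β * √(U 0) := by
    rw [div_le_iff₀ (by simp [hU.1])] at hβ
    linarith
  have hβ0 : 0 ≤ 2 * β := by linarith [(div_nonneg (abs_nonneg ξ) (by positivity)).trans hβ]
  have hP : ξ * P ≤ 2 * β * (dotNstar vs Bs U + (∑ i, Bs i ^ 2) / 2) :=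
    calc ξ * P ≤ |ξ| * |P| := (le_abs_self _).trans_eq (abs_mul _ _)
      _ ≤ 2 * β * √(U 0) * |P| := by gcongr
      _ = 2 * β * (√(U 0) * |P|) := by ring
      _ ≤ _ := mul_le_mul_of_nonneg_left (sqrt_mul_abs_le_dotNstar_add_half_sq vs Bs hU) hβ0
  rw [dotNstar_srcS vs Bs hU.1.ne']
  linarith

end

lemma abs_div_div_le_div {ξ β c Δ : ℝ} (hΔ : 0 < Δ) (h : |ξ| / c ≤ β) : |ξ / Δ| / c ≤ β / Δ := by
  rw [abs_div, abs_of_pos hΔ, div_right_comm]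
  exact div_le_div_of_nonneg_right h hΔ.le

theorem source_term_lower_bound_general (N : ℕ)
    (ωg : Fin N → ℝ) (hωg : ∀ μ, 0 < ωg μ)
    (Δx Δy Δt : ℝ) (hΔx : 0 < Δx) (hΔy : 0 < Δy) (hΔt : 0 < Δt)
    (V W : Bool → Fin N → Fin 8 → ℝ) (ξ η : Bool → Fin N → ℝ)
    (hV : ∀ σ μ, V σ μ ∈ admG) (hW : ∀ σ μ, W σ μ ∈ admG)
    (β1 β2 : ℝ)
    (hβ1 : ∀ σ μ, |ξ σ μ| / (2 * Real.sqrt ((V σ μ) 0)) ≤ β1)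
    (hβ2 : ∀ σ μ, |η σ μ| / (2 * Real.sqrt ((W σ μ) 0)) ≤ β2)
    (vs Bs : Fin 3 → ℝ) :
    dotNstar vs Bs (Δt • ∑ σ : Bool, ∑ μ, (ωg μ / 2) •
        ((-(ξ σ μ / Δx)) • srcS (V σ μ) + (-(η σ μ / Δy)) • srcS (W σ μ)))
      ≥ Δt * (vs 0 * Bs 0 + vs 1 * Bs 1 + vs 2 * Bs 2)
            * ∑ σ : Bool, ∑ μ, (ωg μ / 2) * (ξ σ μ / Δx + η σ μ / Δy)
        - (2 * β1 * Δt / Δx) * ∑ σ : Bool, ∑ μ, (ωg μ / 2)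
            * (dotNstar vs Bs (V σ μ) + (Bs 0 ^ 2 + Bs 1 ^ 2 + Bs 2 ^ 2) / 2)
        - (2 * β2 * Δt / Δy) * ∑ σ : Bool, ∑ μ, (ωg μ / 2)
            * (dotNstar vs Bs (W σ μ) + (Bs 0 ^ 2 + Bs 1 ^ 2 + Bs 2 ^ 2) / 2) := by
  rw [← dotNstarₗ_apply]
  simp only [map_smul, map_sum, map_add, smul_eq_mul, dotNstarₗ_apply, mul_sum,
    ← sum_sub_distrib, ge_iff_le]
  gcongr with σ _ μ _
  have hVμ := le_neg_mul_dotNstar_srcS vs Bs (hV σ μ) (abs_div_div_le_div hΔx (hβ1 σ μ))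
  have hWμ := le_neg_mul_dotNstar_srcS vs Bs (hW σ μ) (abs_div_div_le_div hΔy (hβ2 σ μ))
  simp only [Fin.sum_univ_three] at hVμ hWμ
  have hω := hωg μ
  linear_combination (Δt * (ωg μ / 2)) * (hVμ + hWμ)

/-- Lower bound for the discretized Godunov–Powell source term. -/
theorem source_term_lower_bound (N : ℕ) (hN : 0 < N)
    (ωg : Fin N → ℝ) (hωg : ∀ μ, 0 < ωg μ) (hωgsum : ∑ μ, ωg μ = 1)
    (Δx Δy Δt : ℝ) (hΔx : 0 < Δx) (hΔy : 0 < Δy) (hΔt : 0 < Δt)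
    (V W : Bool → Fin N → Fin 8 → ℝ) (ξ η : Bool → Fin N → ℝ)
    (hV : ∀ σ μ, V σ μ ∈ admG) (hW : ∀ σ μ, W σ μ ∈ admG)
    (β1 β2 : ℝ)
    (hβ1 : ∀ σ μ, |ξ σ μ| / (2 * Real.sqrt ((V σ μ) 0)) ≤ β1)
    (hβ2 : ∀ σ μ, |η σ μ| / (2 * Real.sqrt ((W σ μ) 0)) ≤ β2)
    (vs Bs : Fin 3 → ℝ) :
    dotNstar vs Bs (Δt • ∑ σ : Bool, ∑ μ, (ωg μ / 2) •
        ((-(ξ σ μ / Δx)) • srcS (V σ μ) + (-(η σ μ / Δy)) • srcS (W σ μ)))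
      ≥ Δt * (vs 0 * Bs 0 + vs 1 * Bs 1 + vs 2 * Bs 2)
            * ∑ σ : Bool, ∑ μ, (ωg μ / 2) * (ξ σ μ / Δx + η σ μ / Δy)
        - (2 * β1 * Δt / Δx) * ∑ σ : Bool, ∑ μ, (ωg μ / 2)
            * (dotNstar vs Bs (V σ μ) + (Bs 0 ^ 2 + Bs 1 ^ 2 + Bs 2 ^ 2) / 2)
        - (2 * β2 * Δt / Δy) * ∑ σ : Bool, ∑ μ, (ωg μ / 2)
            * (dotNstar vs Bs (W σ μ) + (Bs 0 ^ 2 + Bs 1 ^ 2 + Bs 2 ^ 2) / 2) :=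
  source_term_lower_bound_general N ωg hωg Δx Δy Δt hΔx hΔy hΔt V W ξ η hV hW β1 β2 hβ1 hβ2 vs Bs
end
end
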